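/- Let X be a k-dimensional simplicial complex on a vertex set V with n vertices and with complete (k−1)-skeleton. Then φ(X) ≤ h̃(X) ≤ (k+1)·φ(X). -/

import Mathlib

/-! Since `K = K(X)` is the complete complex `K_n^k`, both inequalities come from comparing
`|[f]|` with `|δ_K f|`. As `δ_K δ = 0`, `δ_K f = δ_K (f + δ g)` for every `g`, and each face
in the support of `δ_K h` is a vertex added to a face of `h`, so `|δ_K f| ≤ n·|[f]|`.
Conversely, adding to `f` the coboundary of its cone at a vertex `v` leaves exactly the faces
`τ \ {v}` with `v ∈ τ ∈ supp δ_K f`, so `|[f]| ≤ #{τ ∈ supp δ_K f | v ∈ τ}`; summing over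
`v` gives `n·|[f]| ≤ (k+1)·|δ_K f|`. Both inequalities then hold quotient by quotient. -/

open Finset

namespace HigherCheeger

variable {V : Type*} [DecidableEq V] [Fintype V] [LinearOrder V]

/-- An abstract simplicial complex: a family of finite subsets of `V`
closed under taking subsets. -/
def IsComplex (X : Finset (Finset V)) : Prop :=
  ∀ σ ∈ X, ∀ τ ⊆ σ, τ ∈ X

/-- `X` is `k`-dimensional: every face has at most `k+1` vertices
and some face has exactly `k+1` vertices. -/
def IsDim (X : Finset (Finset V)) (k : ℕ) : Prop :=
  (∀ σ ∈ X, σ.card ≤ k + 1) ∧ ∃ σ ∈ X, σ.card = k + 1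

/-- The faces of `X` of cardinality `c` (i.e. of dimension `c - 1`). -/
def faces (X : Finset (Finset V)) (c : ℕ) : Finset (Finset V) :=
  X.filter fun σ => σ.card = c

/-- `X` has complete `(k-1)`-skeleton: every subset of `V` of size at most `k` is a face. -/
def CompleteSkeleton (X : Finset (Finset V)) (k : ℕ) : Prop :=
  ∀ σ : Finset V, σ.card ≤ k → σ ∈ X

/-- The `k`-dimensional completion `K(X)`. -/
def completion (X : Finset (Finset V)) (k : ℕ) : Finset (Finset V) :=
  X ∪ (Finset.univ.filter fun τ : Finset V => τ.card = k + 1 ∧ ∀ v ∈ τ, τ.erase v ∈ X)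

/-- The complete `k`-dimensional complex `K_n^k` on the vertex set `V`. -/
def completeComplex (V : Type*) [DecidableEq V] [Fintype V] (k : ℕ) : Finset (Finset V) :=
  Finset.univ.filter fun σ : Finset V => σ.card ≤ k + 1

/-- The oriented incidence number `[τ:σ]` (with respect to the linear order on `V`):
`(-1)^j` if `σ = τ \ {v_j}` where `v_j` is the `j`-th smallest vertex of `τ`, and `0` otherwise. -/
def incidence (τ σ : Finset V) : ℝ :=
  if σ ⊆ τ ∧ σ.card + 1 = τ.card then
    ∑ v ∈ τ \ σ, (-1 : ℝ) ^ (τ.filter fun w => w < v).card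
  else 0

/-- The real coboundary operator `δ` applied to a cochain living on the faces of
cardinality `c`; the result lives on faces of cardinality `c + 1`. -/
def delta (X : Finset (Finset V)) (c : ℕ) (f : Finset V → ℝ) : Finset V → ℝ :=
  fun τ => ∑ σ ∈ faces X c, incidence τ σ * f σ

/-- The real boundary operator `∂` (the adjoint of `δ`) applied to a cochain living
on the faces of cardinality `c`; the result lives on faces of cardinality `c - 1`. -/
def bdry (X : Finset (Finset V)) (c : ℕ) (f : Finset V → ℝ) : Finset V → ℝ :=
  fun σ => ∑ τ ∈ faces X c, incidence τ σ * f τ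

/-- The inner product of two cochains on the faces of cardinality `c`. -/
def inn (X : Finset (Finset V)) (c : ℕ) (f g : Finset V → ℝ) : ℝ :=
  ∑ σ ∈ faces X c, f σ * g σ

/-- The upper Laplacian `L^up_{k-1} = ∂_k δ_{k-1}` acting on `(k-1)`-cochains
(functions on faces of cardinality `k`). -/
def lapUp (X : Finset (Finset V)) (k : ℕ) (f : Finset V → ℝ) : Finset V → ℝ :=
  bdry X (k + 1) (delta X k f)

/-- The lower Laplacian `L^down_{k-1} = δ_{k-2} ∂_{k-1}` acting on `(k-1)`-cochains. -/
def lapDown (X : Finset (Finset V)) (k : ℕ) (f : Finset V → ℝ) : Finset V → ℝ :=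
  delta X (k - 1) (bdry X k f)

/-- `f ∈ Z_{k-1}(X;ℝ) = ker ∂_{k-1}`. -/
def IsCycle (X : Finset (Finset V)) (k : ℕ) (f : Finset V → ℝ) : Prop :=
  ∀ σ : Finset V, bdry X k f σ = 0

/-- `f ∈ B^{k-1}(X;ℝ) = im δ_{k-2}` (as a cochain, i.e. on the `(k-1)`-faces). -/
def IsCobdry (X : Finset (Finset V)) (k : ℕ) (f : Finset V → ℝ) : Prop :=
  ∃ g : Finset V → ℝ, ∀ σ ∈ faces X k, f σ = delta X (k - 1) g σ

/-- The spectral gap `λ(X)`: the minimum of the Rayleigh quotient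
`⟨L^up_{k-1}(X) f, f⟩ / ⟨f, f⟩` over nonzero `f ∈ Z_{k-1}(X;ℝ)`. -/
noncomputable def spectralGap (X : Finset (Finset V)) (k : ℕ) : ℝ :=
  sInf {r : ℝ | ∃ f : Finset V → ℝ, IsCycle X k f ∧ inn X k f f ≠ 0 ∧
    r = inn X k (lapUp X k f) f / inn X k f f}

/-- A partition of `V` into `m` (nonempty) parts. -/
def IsPartition {m : ℕ} (A : Fin m → Finset V) : Prop :=
  (∀ i, (A i).Nonempty) ∧ ∀ v : V, ∃! i, v ∈ A i

/-- The linear order on `V` is adapted to the family of parts `A`. -/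
def OrderAdapted {m : ℕ} (A : Fin m → Finset V) : Prop :=
  ∀ i j : Fin m, i < j → ∀ v ∈ A i, ∀ w ∈ A j, v < w

/-- `F(A_0,…,A_k)`: the `k`-faces of `X` with exactly one vertex in each part. -/
def Fset (X : Finset (Finset V)) (k : ℕ) (A : Fin (k + 1) → Finset V) : Finset (Finset V) :=
  (faces X (k + 1)).filter fun τ => ∀ i, (τ ∩ A i).card = 1

/-- `F^∂(A_0,…,A_k)`: the `(k+1)`-element members of `K(X)` with exactly one vertex
in each part. -/
def Fpar (X : Finset (Finset V)) (k : ℕ) (A : Fin (k + 1) → Finset V) : Finset (Finset V) :=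
  (faces (completion X k) (k + 1)).filter fun τ => ∀ i, (τ ∩ A i).card = 1

/-- The value `|V|·|F(A_0,…,A_k)| / |F^∂(A_0,…,A_k)|` of a partition
(`⊤` if the denominator is `0`). -/
noncomputable def cheegerVal (X : Finset (Finset V)) (k : ℕ) (A : Fin (k + 1) → Finset V) :
    EReal :=
  if (Fpar X k A).card = 0 then ⊤
  else (((Fintype.card V * (Fset X k A).card : ℝ) / ((Fpar X k A).card : ℝ) : ℝ) : EReal)

/-- The Cheeger constant `h(X)`. -/
noncomputable def cheeger (X : Finset (Finset V)) (k : ℕ) : EReal :=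
  sInf {r : EReal | ∃ A : Fin (k + 1) → Finset V, IsPartition A ∧ r = cheegerVal X k A}

/-- `d(σ)`: the number of members of `F^∂(A_0,…,A_k)` containing `σ`. -/
def degPar (X : Finset (Finset V)) (k : ℕ) (A : Fin (k + 1) → Finset V) (σ : Finset V) : ℕ :=
  ((Fpar X k A).filter fun τ => σ ⊆ τ).card

/-- `C(X)` (with respect to the partition `A`):
the maximum over `τ ∈ F^∂(A_0,…,A_k)` of `∑_{v ∈ τ} d(τ \ {v})`. -/
def Cconst (X : Finset (Finset V)) (k : ℕ) (A : Fin (k + 1) → Finset V) : ℕ :=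
  (Fpar X k A).sup fun τ => ∑ v ∈ τ, degPar X k A (τ.erase v)

/-- The cochain associated to a partition `A`: `σ ↦ (-1)^l·|A_l|` if `A_l` is the unique
part disjoint from `σ`, and `0` otherwise. -/
def assocCochain {k : ℕ} (A : Fin (k + 1) → Finset V) (σ : Finset V) : ℝ :=
  if (Finset.univ.filter fun l => σ ∩ A l = ∅).card = 1 then
    ∑ l ∈ Finset.univ.filter fun l => σ ∩ A l = ∅, (-1 : ℝ) ^ (l : ℕ) * ((A l).card : ℝ)
  else 0

/-- The `Z₂`-coboundary: a `(c-1)`-cochain `f` is sent to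
`τ ↦ ∑_{v ∈ τ} f (τ \ {v})`. -/
def deltaZ2 (f : Finset V → ZMod 2) (τ : Finset V) : ZMod 2 :=
  ∑ v ∈ τ, f (τ.erase v)

/-- The support of the `Z₂`-coboundary of `f` in `X`: the faces of `X` of cardinality
`k + 1` on which the `Z₂`-coboundary of `f` is nonzero.  Its cardinality is `|δ_X f|`. -/
def suppDelta (X : Finset (Finset V)) (k : ℕ) (f : Finset V → ZMod 2) : Finset (Finset V) :=
  (faces X (k + 1)).filter fun τ => deltaZ2 f τ ≠ 0

/-- `F(A_0,…,A_{k-1})`: the `(k-1)`-faces of `X` with exactly one vertex in each of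
the `k` parts. -/
def FsetLow (X : Finset (Finset V)) (k : ℕ) (A : Fin k → Finset V) : Finset (Finset V) :=
  (faces X k).filter fun σ => ∀ i, (σ ∩ A i).card = 1

/-- The Cheeger-type constant `h'(X)`. -/
noncomputable def cheeger' (X : Finset (Finset V)) (k : ℕ) : EReal :=
  sInf {r : EReal | ∃ (A : Fin k → Finset V) (f : Finset V → ZMod 2),
    IsPartition A ∧ (∀ σ, f σ ≠ 0 → σ ∈ FsetLow X k A) ∧
    r = if (suppDelta (completion X k) k f).card = 0 then (⊤ : EReal)
        else (((Fintype.card V * (suppDelta X k f).card : ℝ) /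
              ((suppDelta (completion X k) k f).card : ℝ) : ℝ) : EReal)}

/-- The Hamming norm of a `Z₂`-cochain on the faces of cardinality `c`. -/
def hamming (X : Finset (Finset V)) (c : ℕ) (f : Finset V → ZMod 2) : ℕ :=
  ((faces X c).filter fun σ => f σ ≠ 0).card

/-- `|[f]|`: the minimum Hamming norm of `f + δ_X g` over `g ∈ C^{k-2}(X;Z₂)`. -/
noncomputable def normClass (X : Finset (Finset V)) (k : ℕ) (f : Finset V → ZMod 2) : ℕ :=
  sInf {m : ℕ | ∃ g : Finset V → ZMod 2, m = hamming X k fun σ => f σ + deltaZ2 g σ}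

/-- The coboundary expansion `φ(X) = min_f |δ_X f| / |[f]|` (quotients with denominator
`0` are `∞`). -/
noncomputable def phi (X : Finset (Finset V)) (k : ℕ) : EReal :=
  sInf {r : EReal | ∃ f : Finset V → ZMod 2,
    r = if normClass X k f = 0 then (⊤ : EReal)
        else ((((suppDelta X k f).card : ℝ) / (normClass X k f : ℝ) : ℝ) : EReal)}

/-- `h̃(X) = min_f |V|·|δ_X f| / |δ_{K(X)} f|` (quotients with denominator `0` are `∞`). -/
noncomputable def htilde (X : Finset (Finset V)) (k : ℕ) : EReal :=
  sInf {r : EReal | ∃ f : Finset V → ZMod 2,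
    r = if (suppDelta (completion X k) k f).card = 0 then (⊤ : EReal)
        else (((Fintype.card V * (suppDelta X k f).card : ℝ) /
              ((suppDelta (completion X k) k f).card : ℝ) : ℝ) : EReal)}

section Cochains

variable {V : Type*} {X : Finset (Finset V)} {k : ℕ}

theorem mem_faces_iff_card_eq (hskel : CompleteSkeleton X k) {σ : Finset V} :
    σ ∈ faces X k ↔ σ.card = k :=
  ⟨fun h => (mem_filter.1 h).2, fun h => mem_filter.2 ⟨hskel σ h.le, h⟩⟩

variable [DecidableEq V]

/-- Each `τ \ {v, w}` is reached twice, once for each order of removing `v` and `w`. -/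
theorem deltaZ2_deltaZ2 (g : Finset V → ZMod 2) (τ : Finset V) :
    deltaZ2 (deltaZ2 g) τ = 0 := by
  unfold deltaZ2
  rw [sum_sigma' τ (fun v => τ.erase v) fun v w => g ((τ.erase v).erase w)]
  refine sum_involution (fun p _ => ⟨p.2, p.1⟩) (fun p _ => ?_) (fun p hp _ hswap => ?_)
    (fun p hp => ?_) (fun p _ => rfl)
  · rw [erase_right_comm]
    exact CharTwo.add_self_eq_zero _
  · exact ne_of_mem_erase (mem_sigma.1 hp).2 (congrArg Sigma.fst hswap)
  · obtain ⟨hv, hw⟩ := mem_sigma.1 hp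
    exact mem_sigma.2 ⟨mem_of_mem_erase hw, mem_erase.2 ⟨(ne_of_mem_erase hw).symm, hv⟩⟩

theorem suppDelta_add_deltaZ2 (X : Finset (Finset V)) (k : ℕ) (f g : Finset V → ZMod 2) :
    suppDelta X k (fun σ => f σ + deltaZ2 g σ) = suppDelta X k f := by
  refine filter_congr fun τ _ => ?_
  have h := deltaZ2_deltaZ2 g τ
  unfold deltaZ2 at h ⊢
  rw [sum_add_distrib, h, add_zero]

theorem exists_normClass_eq_hamming (X : Finset (Finset V)) (k : ℕ) (f : Finset V → ZMod 2) :
    ∃ g : Finset V → ZMod 2, normClass X k f = hamming X k fun σ => f σ + deltaZ2 g σ :=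
  Nat.sInf_mem (s := {m | ∃ g : Finset V → ZMod 2, m = hamming X k fun σ => f σ + deltaZ2 g σ})
    ⟨_, 0, rfl⟩

def cone (v : V) (f : Finset V → ZMod 2) : Finset V → ZMod 2 :=
  fun σ => if v ∈ σ then 0 else f (insert v σ)

theorem add_deltaZ2_cone (f : Finset V → ZMod 2) (v : V) (σ : Finset V) :
    f σ + deltaZ2 (cone v f) σ = if v ∈ σ then 0 else deltaZ2 f (insert v σ) := by
  by_cases hv : v ∈ σ
  · have hδ : deltaZ2 (cone v f) σ = f σ := by
      unfold deltaZ2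
      rw [sum_eq_single_of_mem v hv fun w _ hwv => by simp [cone, hwv.symm, hv]]
      simp [cone, insert_erase hv]
    rw [if_pos hv, hδ, CharTwo.add_self_eq_zero]
  · have hterm : ∀ w ∈ σ, cone v f (σ.erase w) = f ((insert v σ).erase w) := fun w hw => by
      have hvw : v ≠ w := fun h => hv (h ▸ hw)
      rw [cone, if_neg fun h => hv (mem_of_mem_erase h), erase_insert_of_ne hvw]
    unfold deltaZ2
    rw [if_neg hv, sum_insert hv, erase_insert hv, sum_congr rfl hterm]

variable [Fintype V]

theorem mem_faces_completion_iff_card_eq (hskel : CompleteSkeleton X k) {τ : Finset V} :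
    τ ∈ faces (completion X k) (k + 1) ↔ τ.card = k + 1 := by
  refine ⟨fun h => (mem_filter.1 h).2, fun hτ => mem_filter.2 ⟨mem_union_right _ ?_, hτ⟩⟩
  refine mem_filter.2 ⟨mem_univ _, hτ, fun v hv => hskel _ ?_⟩
  rw [card_erase_of_mem hv, hτ, Nat.add_sub_cancel]

theorem card_suppDelta_completion_le_card_mul_hamming (hskel : CompleteSkeleton X k)
    (h : Finset V → ZMod 2) :
    (suppDelta (completion X k) k h).card ≤ Fintype.card V * hamming X k h := by
  set S := (faces X k).filter fun σ => h σ ≠ 0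
  have hsub : suppDelta (completion X k) k h ⊆ (S ×ˢ univ).image fun p => insert p.2 p.1 := by
    intro τ hτ
    obtain ⟨hτK, hδτ⟩ := mem_filter.1 hτ
    obtain ⟨v, hv, hhv⟩ : ∃ v ∈ τ, h (τ.erase v) ≠ 0 := by
      by_contra! hzero
      exact hδτ (sum_eq_zero hzero)
    have hcard : (τ.erase v).card = k := by
      rw [card_erase_of_mem hv, (mem_faces_completion_iff_card_eq hskel).1 hτK, Nat.add_sub_cancel]
    exact mem_image.2 ⟨(τ.erase v, v), mem_product.2 ⟨mem_filter.2
      ⟨(mem_faces_iff_card_eq hskel).2 hcard, hhv⟩, mem_univ v⟩, insert_erase hv⟩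
  calc (suppDelta (completion X k) k h).card
      ≤ (S ×ˢ (univ : Finset V)).card := (card_le_card hsub).trans card_image_le
    _ = Fintype.card V * hamming X k h := by rw [card_product, card_univ, mul_comm]; rfl

theorem card_suppDelta_completion_le_card_mul_normClass (hskel : CompleteSkeleton X k)
    (f : Finset V → ZMod 2) :
    (suppDelta (completion X k) k f).card ≤ Fintype.card V * normClass X k f := by
  obtain ⟨g, hg⟩ := exists_normClass_eq_hamming X k f
  rw [hg, ← suppDelta_add_deltaZ2 (completion X k) k f g]
  exact card_suppDelta_completion_le_card_mul_hamming hskel _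

theorem hamming_add_deltaZ2_cone (hskel : CompleteSkeleton X k) (f : Finset V → ZMod 2)
    (v : V) :
    hamming X k (fun σ => f σ + deltaZ2 (cone v f) σ) =
      ((suppDelta (completion X k) k f).filter fun τ => v ∈ τ).card := by
  unfold hamming
  simp only [add_deltaZ2_cone, ne_eq, ite_eq_left_iff, not_forall, exists_prop]
  refine card_nbij' (insert v) (fun τ => τ.erase v) (fun σ hσ => ?_) (fun τ hτ => ?_)
    (fun σ hσ => erase_insert (mem_filter.1 hσ).2.1) (fun τ hτ => insert_erase (mem_filter.1 hτ).2)
  · obtain ⟨hσX, hvσ, hδ⟩ := mem_filter.1 hσ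
    refine mem_filter.2 ⟨mem_filter.2 ⟨(mem_faces_completion_iff_card_eq hskel).2 ?_, hδ⟩,
      mem_insert_self v σ⟩
    rw [card_insert_of_notMem hvσ, (mem_faces_iff_card_eq hskel).1 hσX]
  · obtain ⟨hτ', hvτ⟩ := mem_filter.1 hτ
    obtain ⟨hτK, hδ⟩ := mem_filter.1 hτ'
    refine mem_filter.2 ⟨(mem_faces_iff_card_eq hskel).2 ?_, notMem_erase v τ, ?_⟩
    · rw [card_erase_of_mem hvτ, (mem_faces_completion_iff_card_eq hskel).1 hτK,
        Nat.add_sub_cancel]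
    · rwa [insert_erase hvτ]

theorem card_mul_normClass_le (hskel : CompleteSkeleton X k) (f : Finset V → ZMod 2) :
    Fintype.card V * normClass X k f ≤ (k + 1) * (suppDelta (completion X k) k f).card := by
  set D := suppDelta (completion X k) k f
  calc Fintype.card V * normClass X k f
      = ∑ _v : V, normClass X k f := by rw [sum_const, card_univ, smul_eq_mul]
    _ ≤ ∑ v : V, (D.filter fun τ => v ∈ τ).card := sum_le_sum fun v _ => by
        rw [← hamming_add_deltaZ2_cone hskel f v]
        exact Nat.sInf_le ⟨cone v f, rfl⟩
    _ = ∑ τ ∈ D, τ.card :=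
        (sum_card_bipartiteAbove_eq_sum_card_bipartiteBelow
          (r := fun (v : V) (τ : Finset V) => v ∈ τ)).trans
          (sum_congr rfl fun τ _ => congrArg card (filter_univ_mem τ))
    _ = (k + 1) * D.card := by
        rw [sum_const_nat (s := D) (m := k + 1) fun τ hτ =>
          (mem_faces_completion_iff_card_eq hskel).1 (mem_filter.1 hτ).1, mul_comm]

end Cochains

noncomputable def divOrTop (a b : ℝ) : EReal :=
  if b = 0 then ⊤ else ((a / b : ℝ) : EReal)

theorem divOrTop_le_divOrTop {a b c d : ℝ} (hb : 0 ≤ b) (hd : 0 ≤ d) (hbd : d ≠ 0 → b ≠ 0)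
    (h : a * d ≤ c * b) : divOrTop a b ≤ divOrTop c d := by
  unfold divOrTop
  by_cases hd0 : d = 0
  · rw [if_pos hd0]
    exact le_top
  · rw [if_neg hd0, if_neg (hbd hd0), EReal.coe_le_coe_iff,
      div_le_div_iff₀ (hb.lt_of_ne' (hbd hd0)) (hd.lt_of_ne' hd0)]
    exact h

theorem coe_mul_divOrTop {c : ℝ} (hc : 0 < c) (a b : ℝ) :
    (c : EReal) * divOrTop a b = divOrTop (c * a) b := by
  unfold divOrTop
  split_ifs
  · exact EReal.mul_top_of_pos (EReal.coe_pos.2 hc)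
  · rw [← EReal.coe_mul, mul_div_assoc]

theorem phi_eq_iInf {V : Type*} [DecidableEq V] (X : Finset (Finset V)) (k : ℕ) :
    phi X k = ⨅ f, divOrTop (suppDelta X k f).card (normClass X k f) := by
  rw [phi, ← sInf_range]
  congr 1
  ext r
  simp [divOrTop, eq_comm]

theorem htilde_eq_iInf {V : Type*} [DecidableEq V] [Fintype V] (X : Finset (Finset V)) (k : ℕ) :
    htilde X k = ⨅ f, divOrTop (Fintype.card V * (suppDelta X k f).card)
      (suppDelta (completion X k) k f).card := by
  rw [htilde, ← sInf_range]
  congr 1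
  ext r
  simp [divOrTop, eq_comm]

theorem divOrTop_normClass_le_divOrTop_completion {V : Type*} [DecidableEq V] [Fintype V]
    {X : Finset (Finset V)} {k : ℕ} (hskel : CompleteSkeleton X k) (f : Finset V → ZMod 2) :
    divOrTop (suppDelta X k f).card (normClass X k f) ≤
      divOrTop (Fintype.card V * (suppDelta X k f).card) (suppDelta (completion X k) k f).card := by
  have hA : ((suppDelta (completion X k) k f).card : ℝ) ≤ Fintype.card V * normClass X k f :=
    mod_cast card_suppDelta_completion_le_card_mul_normClass hskel f
  refine divOrTop_le_divOrTop (by positivity) (by positivity) (fun hK hN => ?_) ?_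
  · rw [hN, mul_zero] at hA
    exact hK (hA.antisymm (by positivity))
  · nlinarith [mul_le_mul_of_nonneg_left hA (Nat.cast_nonneg (suppDelta X k f).card)]

theorem divOrTop_completion_le_divOrTop_normClass {V : Type*} [DecidableEq V] [Fintype V]
    [Nonempty V] {X : Finset (Finset V)} {k : ℕ} (hskel : CompleteSkeleton X k)
    (f : Finset V → ZMod 2) :
    divOrTop (Fintype.card V * (suppDelta X k f).card) (suppDelta (completion X k) k f).card ≤
      divOrTop ((k + 1) * (suppDelta X k f).card) (normClass X k f) := by
  have hn : (0 : ℝ) < Fintype.card V := Nat.cast_pos.2 Fintype.card_pos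
  have hB : Fintype.card V * (normClass X k f : ℝ) ≤
      (k + 1) * (suppDelta (completion X k) k f).card :=
    mod_cast card_mul_normClass_le hskel f
  refine divOrTop_le_divOrTop (by positivity) (by positivity) (fun hN hK => ?_) ?_
  · rw [hK, mul_zero] at hB
    exact hN (by nlinarith)
  · nlinarith [mul_le_mul_of_nonneg_left hB (Nat.cast_nonneg (suppDelta X k f).card)]

theorem phi_le_htilde_le_of_completeSkeleton_general
    {V : Type*} [DecidableEq V] [Fintype V]
    (X : Finset (Finset V)) (k : ℕ)
    (hdim : IsDim X k) (hskel : CompleteSkeleton X k) :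
    phi X k ≤ htilde X k ∧ htilde X k ≤ (((k + 1 : ℝ)) : EReal) * phi X k := by
  obtain ⟨σ, -, hσ⟩ := hdim.2
  obtain ⟨v, -⟩ := card_pos.1 (by omega : 0 < σ.card)
  have : Nonempty V := ⟨v⟩
  rw [phi_eq_iInf, htilde_eq_iInf]
  refine ⟨iInf_mono (divOrTop_normClass_le_divOrTop_completion hskel), ?_⟩
  obtain ⟨f, hf⟩ := exists_eq_ciInf_of_finite (f := fun f : Finset V → ZMod 2 =>
    divOrTop (suppDelta X k f).card (normClass X k f))
  rw [← hf, coe_mul_divOrTop k.cast_add_one_pos]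
  exact (iInf_le _ f).trans (divOrTop_completion_le_divOrTop_normClass hskel f)

/-- For a `k`-dimensional complex `X` on `n` vertices with complete `(k-1)`-skeleton:
`φ(X) ≤ h̃(X) ≤ (k+1)·φ(X)`. -/
theorem phi_le_htilde_le_of_completeSkeleton
    {V : Type*} [DecidableEq V] [Fintype V] [LinearOrder V]
    (X : Finset (Finset V)) (k : ℕ)
    (hX : IsComplex X) (hdim : IsDim X k) (hskel : CompleteSkeleton X k) :
    phi X k ≤ htilde X k ∧ htilde X k ≤ (((k + 1 : ℝ)) : EReal) * phi X k :=
  phi_le_htilde_le_of_completeSkeleton_general X k hdim hskel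

end HigherCheeger
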